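/- Let ρ = (−1 + √−3)/2 (a primitive cube root of unity), let Λ = ℤ + ℤρ ⊆ ℂ be the Eisenstein lattice and E = ℂ/Λ, and take ω' = 1 + 2ρ (= √−3) and ω = ρ·ω' (so that ω·Λ ⊆ Λ, ω'·Λ ⊆ Λ, and (ω/ω')³ = 1). Then for every n ≥ 0, ([ω] × [ω'])^{n+3}(Δ) = ([ω] × [ω'])^{n}(Δ) and (φ_ω × φ_{ω'})^{n+3}(Δ') = (φ_ω × φ_{ω'})^{n}(Δ'); that is, Δ and Δ' are both pre-periodic with the same pair (n,3). -/

import Mathlib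

open Complex

noncomputable section

/-- The analytic model `E = ℂ/Λ` of an elliptic curve with period lattice `Λ`. -/
abbrev EC (Λ : AddSubgroup ℂ) : Type := ℂ ⧸ Λ

/-- The endomorphism `[ω] : E → E` induced by multiplication by `ω` on `ℂ`,
for `ω` with `ω·Λ ⊆ Λ`. -/
def mulE (Λ : AddSubgroup ℂ) (ω : ℂ) (hω : ∀ x ∈ Λ, ω * x ∈ Λ) : EC Λ →+ EC Λ :=
  QuotientAddGroup.map Λ Λ (AddMonoidHom.mulLeft ω) (fun x hx => hω x hx)

/-- The relation identifying a point of `E` with its negative. -/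
def negRel (Λ : AddSubgroup ℂ) (x y : EC Λ) : Prop := x = y ∨ x = -y

/-- The quotient `E/±` of `E` by the involution `z ↦ -z`. -/
abbrev ECpm (Λ : AddSubgroup ℂ) : Type := Quot (negRel Λ)

/-- The quotient map `q : E → E/±`. -/
def qpm (Λ : AddSubgroup ℂ) : EC Λ → ECpm Λ := Quot.mk _

/-- The Lattès-type map `φ_ω : E/± → E/±` induced by `[ω]`. -/
def lattes (Λ : AddSubgroup ℂ) (ω : ℂ) (hω : ∀ x ∈ Λ, ω * x ∈ Λ) :
    ECpm Λ → ECpm Λ :=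
  Quot.map (mulE Λ ω hω) (by
    intro x y h
    rcases h with h | h
    · exact Or.inl (by rw [h])
    · exact Or.inr (by rw [h, map_neg]))

/-! Since `ρ³ = 1`, the multipliers satisfy `ω³ = ω'³`, so `[ω]³ = [ω']³` on `E` and hence
`φ_ω³ = φ_ω'³` on `E/±`. For `F = f × g` with `f³ = g³` one has `F^{n+3}(Δ) = F^n(F³(Δ))`
and `F³(Δ) = (f³ × f³)(Δ) = Δ` as soon as `f³` is surjective, which holds for `[ω]` because
`ω ≠ 0`. -/

open Function

namespace Set

theorem image_prodMap_self_diagonal {α : Type*} {h : α → α} (hh : Surjective h) :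
    Prod.map h h '' diagonal α = diagonal α := by
  rw [← range_diag, ← range_comp, show Prod.map h h ∘ Function.diag = Function.diag ∘ h from rfl,
    range_comp, hh.range_eq, image_univ]

theorem image_diagonal_prodMap_iterate_add {α : Type*} {f g : α → α} {k : ℕ}
    (hfg : f^[k] = g^[k]) (hk : Surjective f^[k]) (n : ℕ) :
    (Prod.map f g)^[n + k] '' diagonal α = (Prod.map f g)^[n] '' diagonal α := by
  rw [iterate_add, image_comp, Prod.map_iterate f g k, ← hfg, image_prodMap_self_diagonal hk]

end Set

section Endomorphisms

variable {Λ : AddSubgroup ℂ}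

theorem mulE_mk (a : ℂ) (ha : ∀ x ∈ Λ, a * x ∈ Λ) (z : ℂ) :
    mulE Λ a ha (z : EC Λ) = ((a * z : ℂ) : EC Λ) :=
  rfl

theorem mulE_iterate_mk (a : ℂ) (ha : ∀ x ∈ Λ, a * x ∈ Λ) (k : ℕ) (z : ℂ) :
    (mulE Λ a ha)^[k] (z : EC Λ) = ((a ^ k * z : ℂ) : EC Λ) := by
  induction k with
  | zero => simp
  | succ k ih => rw [iterate_succ_apply', ih, mulE_mk, pow_succ', mul_assoc]

theorem mulE_iterate_eq_of_pow_eq {a b : ℂ} (ha : ∀ x ∈ Λ, a * x ∈ Λ)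
    (hb : ∀ x ∈ Λ, b * x ∈ Λ) {k : ℕ} (hab : a ^ k = b ^ k) :
    (mulE Λ a ha)^[k] = (mulE Λ b hb)^[k] := by
  funext x
  induction x using QuotientAddGroup.induction_on with
  | H z => rw [mulE_iterate_mk, mulE_iterate_mk, hab]

theorem mulE_surjective {a : ℂ} (ha : ∀ x ∈ Λ, a * x ∈ Λ) (ha0 : a ≠ 0) :
    Surjective (mulE Λ a ha) := by
  intro y
  induction y using QuotientAddGroup.induction_on with
  | H z => exact ⟨((z / a : ℂ) : EC Λ), by rw [mulE_mk, mul_div_cancel₀ z ha0]⟩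

theorem semiconj_qpm_mulE_lattes (a : ℂ) (ha : ∀ x ∈ Λ, a * x ∈ Λ) :
    Semiconj (qpm Λ) (mulE Λ a ha) (lattes Λ a ha) :=
  fun _ => rfl

theorem lattes_iterate_eq_of_mulE_iterate_eq {a b : ℂ} (ha : ∀ x ∈ Λ, a * x ∈ Λ)
    (hb : ∀ x ∈ Λ, b * x ∈ Λ) {k : ℕ} (hab : (mulE Λ a ha)^[k] = (mulE Λ b hb)^[k]) :
    (lattes Λ a ha)^[k] = (lattes Λ b hb)^[k] := by
  funext x
  induction x using Quot.ind with
  | mk z =>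
    change (lattes Λ a ha)^[k] (qpm Λ z) = (lattes Λ b hb)^[k] (qpm Λ z)
    rw [← (semiconj_qpm_mulE_lattes a ha).iterate_right k z,
      ← (semiconj_qpm_mulE_lattes b hb).iterate_right k z, hab]

theorem lattes_surjective {a : ℂ} (ha : ∀ x ∈ Λ, a * x ∈ Λ)
    (hsurj : Surjective (mulE Λ a ha)) : Surjective (lattes Λ a ha) :=
  Surjective.of_comp (g := qpm Λ) <| by
    rw [← (semiconj_qpm_mulE_lattes a ha).comp_eq]
    exact Quot.mk_surjective.comp hsurj

end Endomorphisms

theorem rho_sq_add_rho_add_one_eq_zero {ρ : ℂ} (hρ : ρ = (-1 + I * Real.sqrt 3) / 2) :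
    ρ ^ 2 + ρ + 1 = 0 := by
  have hsqrt : (Real.sqrt 3 : ℂ) ^ 2 = 3 := by
    rw [← ofReal_pow, Real.sq_sqrt (by norm_num : (0 : ℝ) ≤ 3)]
    norm_num
  subst hρ
  linear_combination (I ^ 2 / 4) * hsqrt + (3 / 4 : ℂ) * I_sq

theorem eisenstein_diagonals_preperiodic_pair_three_general
    (ρ : ℂ) (hρ : ρ = (-1 + Complex.I * Real.sqrt 3) / 2)
    (Λ : AddSubgroup ℂ)
    (ω' ω : ℂ) (hω'def : ω' = 1 + 2 * ρ) (hωdef : ω = ρ * ω')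
    (hω : ∀ x ∈ Λ, ω * x ∈ Λ) (hω' : ∀ x ∈ Λ, ω' * x ∈ Λ)
    (n : ℕ) :
    (Prod.map ⇑(mulE Λ ω hω) ⇑(mulE Λ ω' hω'))^[n + 3] '' Set.diagonal (EC Λ) =
      (Prod.map ⇑(mulE Λ ω hω) ⇑(mulE Λ ω' hω'))^[n] '' Set.diagonal (EC Λ) ∧
    (Prod.map (lattes Λ ω hω) (lattes Λ ω' hω'))^[n + 3] '' Set.diagonal (ECpm Λ) =
      (Prod.map (lattes Λ ω hω) (lattes Λ ω' hω'))^[n] '' Set.diagonal (ECpm Λ) := by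
  have hquad := rho_sq_add_rho_add_one_eq_zero hρ
  have hcube : ω ^ 3 = ω' ^ 3 := by
    rw [hωdef]
    linear_combination ω' ^ 3 * (ρ - 1) * hquad
  have hω'sq : ω' ^ 2 = -3 := by
    rw [hω'def]
    linear_combination 4 * hquad
  have hω0 : ω ≠ 0 := by
    rintro rfl
    have : ω' = 0 := pow_eq_zero_iff (n := 3) (by norm_num) |>.mp (by rw [← hcube]; ring)
    norm_num [this] at hω'sq
  have hsurj := mulE_surjective hω hω0
  have hmul3 := mulE_iterate_eq_of_pow_eq hω hω' hcube
  exact ⟨Set.image_diagonal_prodMap_iterate_add hmul3 (hsurj.iterate 3) n,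
    Set.image_diagonal_prodMap_iterate_add (lattes_iterate_eq_of_mulE_iterate_eq hω hω' hmul3)
      ((lattes_surjective hω hsurj).iterate 3) n⟩

/-- For the Eisenstein lattice `Λ = ℤ + ℤρ` with `ρ = (-1 + √-3)/2`, `ω' = 1 + 2ρ = √-3` and
`ω = ρ·ω'`, for every `n` both the diagonal `Δ` and the diagonal `Δ'` are pre-periodic with
the same pair `(n, 3)`. -/
theorem eisenstein_diagonals_preperiodic_pair_three
    (ρ : ℂ) (hρ : ρ = (-1 + Complex.I * Real.sqrt 3) / 2)
    (Λ : AddSubgroup ℂ) (hΛ : Λ = AddSubgroup.closure {(1 : ℂ), ρ})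
    (ω' ω : ℂ) (hω'def : ω' = 1 + 2 * ρ) (hωdef : ω = ρ * ω')
    (hω : ∀ x ∈ Λ, ω * x ∈ Λ) (hω' : ∀ x ∈ Λ, ω' * x ∈ Λ)
    (n : ℕ) :
    (Prod.map ⇑(mulE Λ ω hω) ⇑(mulE Λ ω' hω'))^[n + 3] '' Set.diagonal (EC Λ) =
      (Prod.map ⇑(mulE Λ ω hω) ⇑(mulE Λ ω' hω'))^[n] '' Set.diagonal (EC Λ) ∧
    (Prod.map (lattes Λ ω hω) (lattes Λ ω' hω'))^[n + 3] '' Set.diagonal (ECpm Λ) =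
      (Prod.map (lattes Λ ω hω) (lattes Λ ω' hω'))^[n] '' Set.diagonal (ECpm Λ) :=
  eisenstein_diagonals_preperiodic_pair_three_general ρ hρ Λ ω' ω hω'def hωdef hω hω' n
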